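/- arXiv:1001.4170 — 7 statements merged into one kernel-verified Lean document; each statement's English description precedes it below -/
import Mathlib

section
/- For integers a ≥ 1, k ≥ 1, and 1 ≤ b < q^k (with base q ≥ 2), the q-ary sum of digits satisfies s_q(a·q^k − b) = s_q(a − 1) + (q − 1)·k − s_q(b − 1). -/
lemma sum_digits_add_mul (q d T : ℕ) (hq : 2 ≤ q) (hd : d < q) :
    (Nat.digits q (d + q * T)).sum = d + (Nat.digits q T).sum := by
  rcases Nat.eq_zero_or_pos (d + T) with h | h
  · have hd0 : d = 0 := by omega
    have hT0 : T = 0 := by omega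
    simp [hd0, hT0]
  · have : d ≠ 0 ∨ T ≠ 0 := by omega
    rw [Nat.digits_add q (by omega) d T hd this]
    simp

lemma sum_digits_complement (q : ℕ) (hq : 2 ≤ q) :
    ∀ k m : ℕ, m < q ^ k →
      (Nat.digits q (q ^ k - 1 - m)).sum + (Nat.digits q m).sum = (q - 1) * k := by
  intro k
  induction k with
  | zero =>
    intro m hm
    have : m = 0 := by simpa using hm
    subst this; simp
  | succ k ih =>
    intro m hm
    have hr : m % q < q := Nat.mod_lt _ (by omega)
    have hm' : m / q < q ^ k := by
      rw [Nat.div_lt_iff_lt_mul (by omega)]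
      calc m < q ^ (k + 1) := hm
        _ = q ^ k * q := by ring
    have hqk : 1 ≤ q ^ k := Nat.one_le_pow _ _ (by omega)
    have key : q ^ (k + 1) - 1 - m = (q - 1 - m % q) + q * (q ^ k - 1 - m / q) := by
      have e1 : q * (q ^ k - 1 - m / q) = q * q ^ k - q - q * (m / q) := by
        rw [Nat.mul_sub, Nat.mul_sub, Nat.mul_one]
      have e2 : q * (m / q) + m % q = m := Nat.div_add_mod m q
      have e3 : q * (m / q) + q ≤ q * q ^ k := by
        have h := Nat.succ_le_of_lt hm'
        calc q * (m / q) + q = q * (m / q + 1) := by ring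
          _ ≤ q * q ^ k := Nat.mul_le_mul_left q h
      rw [pow_succ, mul_comm (q ^ k) q, e1]
      omega
    rw [key, sum_digits_add_mul q _ _ hq (by omega)]
    have hdm : (Nat.digits q m).sum = m % q + (Nat.digits q (m / q)).sum := by
      have : m = m % q + q * (m / q) := (Nat.mod_add_div m q).symm
      conv_lhs => rw [this]
      exact sum_digits_add_mul q _ _ hq hr
    rw [hdm]
    have ih' := ih (m / q) hm'
    have hx : (q - 1) * (k + 1) = (q - 1) * k + (q - 1) := by ring
    rw [hx]
    generalize (q - 1) * k = P at ih' ⊢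
    omega

lemma sum_digits_split (q k n m : ℕ) (hq : 2 ≤ q) (hn : n < q ^ k) :
    (Nat.digits q (n + q ^ k * m)).sum = (Nat.digits q n).sum + (Nat.digits q m).sum := by
  rcases Nat.eq_zero_or_pos m with rfl | hm
  · simp
  · have hlen : (Nat.digits q n).length ≤ k := by
      rcases Nat.eq_zero_or_pos n with rfl | hn0
      · simp
      · rw [Nat.digits_len q n (by omega) (by omega)]
        have : Nat.log q n < k := Nat.log_lt_of_lt_pow (by omega) hn
        omega
    have := Nat.digits_append_zeroes_append_digits (b := q) (k := k - (Nat.digits q n).length)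
      (m := m) (n := n) (by omega) hm
    rw [show (Nat.digits q n).length + (k - (Nat.digits q n).length) = k by omega] at this
    rw [← this]
    simp

theorem digit_sum_split_neg (q a k b : ℕ) (hq : 2 ≤ q) (ha : 1 ≤ a) (hk : 1 ≤ k)
    (hb1 : 1 ≤ b) (hb2 : b < q ^ k) :
    ((Nat.digits q (a * q ^ k - b)).sum : ℤ) =
      (Nat.digits q (a - 1)).sum + (q - 1) * k - (Nat.digits q (b - 1)).sum := by
  have hqk : 1 ≤ q ^ k := Nat.one_le_pow _ _ (by omega)
  have h1 : a * q ^ k - b = (q ^ k - b) + q ^ k * (a - 1) := by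
    have : a * q ^ k = q ^ k + q ^ k * (a - 1) := by
      cases a with
      | zero => omega
      | succ n => simp [Nat.mul_comm]; ring
    omega
  rw [h1, sum_digits_split q k _ _ hq (by omega)]
  have h2 : q ^ k - b = q ^ k - 1 - (b - 1) := by omega
  have h3 := sum_digits_complement q hq k (b - 1) (by omega)
  rw [h2]
  have hcast : ((q : ℤ) - 1) * k = ((q - 1) * k : ℕ) := by
    push_cast [Nat.cast_sub (by omega : 1 ≤ q)]
    ring
  have h3' : ((Nat.digits q (q ^ k - 1 - (b - 1))).sum : ℤ) +
      ((Nat.digits q (b - 1)).sum : ℤ) = (((q - 1) * k : ℕ) : ℤ) := by exact_mod_cast h3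
  rw [hcast]
  push_cast at h3' ⊢
  linarith [h3']
end

section
/- Let m = q^l − r where l ≥ 1, 1 ≤ r ≤ q^l − 3 (so m ≥ 3), and let t_m(x) = m·x^4 + m·x^3 − x^2 + m·x + m. If q^k > m, then s_q(t_m(q^k)) = (q−1)k + s_q(m−1) + 3·s_q(m). -/
/-! For `Q = q ^ k > m ≥ 1` the subtraction of `Q ^ 2` borrows from the `Q ^ 3` place, so
`t_m(Q) = m + m Q + (Q - 1) Q ^ 2 + (m - 1) Q ^ 3 + m Q ^ 4` with every block below `Q`.
Since `Q` is a power of `q`, the base-`q` expansion of `t_m(Q)` is the concatenation of those of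
the blocks, and the block `Q - 1 = q ^ k - 1` consists of `k` digits `q - 1`. -/

namespace Nat

variable {b : ℕ}

theorem digits_sum_add_base_pow_mul (hb : 1 < b) {k a c : ℕ} (ha : a < b ^ k) :
    (b.digits (a + b ^ k * c)).sum = (b.digits a).sum + (b.digits c).sum := by
  rcases Nat.eq_zero_or_pos c with rfl | hc
  · simp
  have hlen : (b.digits a).length ≤ k := (digits_length_le_iff hb a).2 ha
  rw [← Nat.add_sub_cancel' hlen, ← digits_append_zeroes_append_digits hb hc]
  simp

theorem digits_sum_ofDigits_base_pow (hb : 1 < b) {k : ℕ} {L : List ℕ}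
    (hL : ∀ x ∈ L, x < b ^ k) :
    (b.digits (ofDigits (b ^ k) L)).sum = (L.map fun x => (b.digits x).sum).sum := by
  induction L with
  | nil => simp
  | cons x L ih =>
    rw [ofDigits_cons, digits_sum_add_base_pow_mul hb (hL x (by simp)),
      ih fun y hy => hL y (by simp [hy]), List.map_cons, List.sum_cons]

theorem digits_sum_base_pow_sub_one (hb : 1 < b) (k : ℕ) :
    (b.digits (b ^ k - 1)).sum = (b - 1) * k := by
  induction k with
  | zero => simp
  | succ k ih =>
    have hsplit : b ^ (k + 1) - 1 = (b - 1) + b ^ 1 * (b ^ k - 1) := by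
      have := one_le_pow k b (by omega)
      zify [this, one_le_pow (k + 1) b (by omega), hb.le]
      ring
    rw [hsplit, digits_sum_add_base_pow_mul hb (by simp; omega), ih,
      digits_of_lt b (b - 1) (by omega) (by omega)]
    simp only [List.sum_singleton]
    ring

end Nat

theorem tm_eq_ofDigits {m Q : ℕ} (hm : 0 < m) (hQ : 0 < Q) :
    m * Q ^ 4 + m * Q ^ 3 + m * Q + m - Q ^ 2 = Nat.ofDigits Q [m, m, Q - 1, m - 1, m] := by
  have hsq : Q ^ 2 ≤ m * Q ^ 3 :=
    (Nat.pow_le_pow_right hQ (by omega)).trans (Nat.le_mul_of_pos_left _ hm)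
  simp only [Nat.ofDigits_cons, Nat.ofDigits_nil]
  zify [hm, hQ, show Q ^ 2 ≤ m * Q ^ 4 + m * Q ^ 3 + m * Q + m by omega]
  ring

theorem digit_sum_tm_general (q l r k m : ℕ) (hq : 2 ≤ q)
    (hr2 : r ≤ q ^ l - 3) (hm : m = q ^ l - r) (hk : m < q ^ k) :
    (Nat.digits q (m * q ^ (4 * k) + m * q ^ (3 * k) + m * q ^ k + m - q ^ (2 * k))).sum =
      (q - 1) * k + (Nat.digits q (m - 1)).sum + 3 * (Nat.digits q m).sum := by
  have hm0 : 0 < m := by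
    have := Nat.one_le_pow l q (by omega)
    omega
  have hblocks : ∀ x ∈ [m, m, q ^ k - 1, m - 1, m], x < q ^ k := by
    simp only [List.mem_cons, List.not_mem_nil, or_false]
    omega
  rw [pow_mul', pow_mul', pow_mul', tm_eq_ofDigits hm0 (by omega),
    Nat.digits_sum_ofDigits_base_pow hq hblocks]
  simp only [List.map_cons, List.map_nil, List.sum_cons, List.sum_nil,
    Nat.digits_sum_base_pow_sub_one hq]
  ring

theorem digit_sum_tm (q l r k m : ℕ) (hq : 2 ≤ q) (hl : 1 ≤ l)
    (hr1 : 1 ≤ r) (hr2 : r ≤ q ^ l - 3) (hm : m = q ^ l - r) (hk : m < q ^ k) :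
    (Nat.digits q (m * q ^ (4 * k) + m * q ^ (3 * k) + m * q ^ k + m - q ^ (2 * k))).sum =
      (q - 1) * k + (Nat.digits q (m - 1)).sum + 3 * (Nat.digits q m).sum :=
  digit_sum_tm_general q l r k m hq hr2 hm hk
end

section
/- Suppose there exist positive integers u and v such that s_2(u) + s_2(v) = k and s_2(u^2) + s_2(u·v) + s_2(v^2) = k. Then for all sufficiently large i, the number n = u·2^{i + L} + v, where L is the number of binary digits of v, satisfies s_2(n) = s_2(n^2) = k. -/
lemma sdig_add (x y e : ℕ) (hy : 0 < y) (he : (Nat.digits 2 x).length ≤ e) :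
    (Nat.digits 2 (x + 2 ^ e * y)).sum =
      (Nat.digits 2 x).sum + (Nat.digits 2 y).sum := by
  obtain ⟨k, rfl⟩ := Nat.exists_eq_add_of_le he
  rw [← Nat.digits_append_zeroes_append_digits (by norm_num) hy]
  simp [List.sum_append]

theorem concat_infinite_family (u v k : ℕ) (hu : 0 < u) (hv : 0 < v)
    (h1 : (Nat.digits 2 u).sum + (Nat.digits 2 v).sum = k)
    (h2 : (Nat.digits 2 (u ^ 2)).sum + (Nat.digits 2 (u * v)).sum
        + (Nat.digits 2 (v ^ 2)).sum = k) :
    ∃ I : ℕ, ∀ i ≥ I,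
      (Nat.digits 2 (u * 2 ^ (i + (Nat.digits 2 v).length) + v)).sum = k ∧
      (Nat.digits 2 ((u * 2 ^ (i + (Nat.digits 2 v).length) + v) ^ 2)).sum = k := by
  refine ⟨(Nat.digits 2 (v ^ 2)).length + (Nat.digits 2 (u * v)).length + 2,
    fun i hi => ?_⟩
  set L := (Nat.digits 2 v).length with hL
  set m := i + L with hm
  have hmI : (Nat.digits 2 (v ^ 2)).length + (Nat.digits 2 (u * v)).length + 2 ≤ m := by
    omega
  have hm1 : 1 ≤ m := by omega
  constructor
  · have : u * 2 ^ m + v = v + 2 ^ m * u := by ring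
    rw [this, sdig_add v u m hu (by omega)]
    omega
  · have key : (u * 2 ^ m + v) ^ 2 = v ^ 2 + 2 ^ (m + 1) * (u * v + 2 ^ (m - 1) * u ^ 2) := by
      have h2m : 2 ^ (m + 1) * 2 ^ (m - 1) = 2 ^ m * 2 ^ m := by
        rw [← pow_add, ← pow_add]; congr 1; omega
      have expand : v ^ 2 + 2 ^ (m + 1) * (u * v + 2 ^ (m - 1) * u ^ 2)
          = v ^ 2 + 2 ^ (m + 1) * (u * v) + 2 ^ (m + 1) * 2 ^ (m - 1) * u ^ 2 := by
        ring
      rw [expand, h2m]; ring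
    rw [key, sdig_add _ _ _ (by positivity) (by omega),
      sdig_add _ _ _ (by positivity) (by omega)]
    omega
end

section
/- Let U be the positive integer with binary representation consisting of k ones, then a zero, then n ones (i.e., U = 2^{n+1}(2^k − 1) + 2^n − 1), where n ≥ k + 2 and k ≥ 1. Then s_2(U^2) = n. -/
lemma digits_two_pow_sub_one (m : ℕ) :
    Nat.digits 2 (2 ^ m - 1) = List.replicate m 1 := by
  induction m with
  | zero => simp
  | succ m ih =>
    have h : 2 ^ (m + 1) - 1 = 2 * (2 ^ m - 1) + 1 := by
      have : 1 ≤ 2 ^ m := Nat.one_le_two_pow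
      omega
    rw [h, Nat.digits_def' (by norm_num : 1 < 2) (by omega)]
    have h1 : (2 * (2 ^ m - 1) + 1) % 2 = 1 := by omega
    have h2 : (2 * (2 ^ m - 1) + 1) / 2 = 2 ^ m - 1 := by omega
    rw [h1, h2, ih, List.replicate_succ]

lemma sum_digits_add_pow_mul (a b m : ℕ) (ha : a < 2 ^ m) :
    (Nat.digits 2 (a + 2 ^ m * b)).sum =
      (Nat.digits 2 a).sum + (Nat.digits 2 b).sum := by
  rcases Nat.eq_zero_or_pos b with rfl | hb
  · simp
  have hlen : (Nat.digits 2 a).length ≤ m := by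
    rcases Nat.eq_zero_or_pos a with rfl | ha0
    · simp
    rw [Nat.digits_len 2 a (by norm_num) (by omega)]
    have := Nat.log_lt_of_lt_pow (by omega : a ≠ 0) ha
    omega
  obtain ⟨c, hc⟩ := Nat.exists_eq_add_of_le hlen
  have := Nat.digits_append_zeroes_append_digits (b := 2) (k := c) (m := b) (n := a)
    (by norm_num) hb
  rw [← hc] at this
  rw [← this]
  simp

theorem square_digit_sum_block (k n : ℕ) (hk : 1 ≤ k) (hn : k + 2 ≤ n) :
    (Nat.digits 2 ((2 ^ (n + 1) * (2 ^ k - 1) + 2 ^ n - 1) ^ 2)).sum = n := by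
  obtain ⟨a, rfl⟩ : ∃ a, n = a + k + 2 := ⟨n - k - 2, by omega⟩
  set n := a + k + 2 with hn'
  have key : (2 ^ (n + 1) * (2 ^ k - 1) + 2 ^ n - 1) ^ 2 =
      1 + 2 ^ (n + 1) * (1 + 2 ^ (k + 1) * ((2 ^ a - 1) + 2 ^ n * (2 ^ k - 1))) := by
    have h1 : (1:ℕ) ≤ 2 ^ k := Nat.one_le_two_pow
    have h2 : (1:ℕ) ≤ 2 ^ a := Nat.one_le_two_pow
    have h3 : (1:ℕ) ≤ 2 ^ n := Nat.one_le_two_pow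
    have h4 : (1:ℕ) ≤ 2 ^ (n + 1) * (2 ^ k - 1) + 2 ^ n := le_add_of_le_right h3
    zify [h1, h2, h3, h4]
    simp only [hn', pow_add, pow_succ, pow_zero]
    ring
  rw [key]
  rw [sum_digits_add_pow_mul _ _ _ (by exact Nat.one_lt_two_pow (by omega))]
  rw [sum_digits_add_pow_mul _ _ _ (by exact Nat.one_lt_two_pow (by omega))]
  have hlt : 2 ^ a - 1 < 2 ^ n := by
    have : (2:ℕ) ^ a ≤ 2 ^ n := Nat.pow_le_pow_right (by norm_num) (by omega)
    have := Nat.one_le_two_pow (n := a)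
    omega
  rw [sum_digits_add_pow_mul _ _ _ hlt]
  rw [digits_two_pow_sub_one, digits_two_pow_sub_one]
  simp
  omega
end

section
/- Let u = 2^{n_1+1}(2^{k_1} − 1) + 2^{n_1} − 1 and v = 2^{n_2+1}(2^{k_2} − 1) + 2^{n_2} − 1 with n_1 ≥ k_1 + 2, n_2 ≥ k_2 + 2, n_2 = k_1 + 1, and n_1 = n_2 + k_2 + 1. Then s_2(u·v) = k_1 + 2. -/
lemma digits_sum_split (m lo hi : ℕ) (h : lo < 2 ^ m) :
    (Nat.digits 2 (lo + 2 ^ m * hi)).sum =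
      (Nat.digits 2 lo).sum + (Nat.digits 2 hi).sum := by
  rcases Nat.eq_zero_or_pos hi with rfl | hpos
  · simp
  have hlen : (Nat.digits 2 lo).length ≤ m := by
    rcases Nat.eq_zero_or_pos lo with rfl | hlo
    · simp
    rw [Nat.digits_len 2 lo (by norm_num) (by omega)]
    have := Nat.log_lt_of_lt_pow (by omega : lo ≠ 0) h
    omega
  have key := Nat.digits_append_zeroes_append_digits
    (b := 2) (k := m - (Nat.digits 2 lo).length) (m := hi) (n := lo)
    (by norm_num) hpos
  rw [show (Nat.digits 2 lo).length + (m - (Nat.digits 2 lo).length) = m by omega] at key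
  rw [← key]
  simp [List.sum_append, List.sum_replicate]

lemma digits_sum_ones (k : ℕ) : (Nat.digits 2 (2 ^ k - 1)).sum = k := by
  induction k with
  | zero => simp
  | succ k ih =>
    have h1 : (1:ℕ) ≤ 2 ^ k := Nat.one_le_two_pow
    have h : 2 ^ (k + 1) - 1 = 1 + 2 * (2 ^ k - 1) := by
      rw [pow_succ]; omega
    rw [h, Nat.digits_def' (by norm_num : 1 < 2) (by omega)]
    have hm : (1 + 2 * (2 ^ k - 1)) % 2 = 1 := by omega
    have hd : (1 + 2 * (2 ^ k - 1)) / 2 = 2 ^ k - 1 := by omega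
    rw [hm, hd]
    simp [ih]
    omega

theorem uv_digit_sum_case1 (k₁ k₂ n₁ n₂ : ℕ)
    (h1 : k₁ + 2 ≤ n₁) (h2 : k₂ + 2 ≤ n₂) (h3 : n₂ = k₁ + 1) (h4 : n₁ = n₂ + k₂ + 1) :
    (Nat.digits 2 ((2 ^ (n₁ + 1) * (2 ^ k₁ - 1) + 2 ^ n₁ - 1) *
      (2 ^ (n₂ + 1) * (2 ^ k₂ - 1) + 2 ^ n₂ - 1))).sum = k₁ + 2 := by
  subst h4 h3
  obtain ⟨d, rfl⟩ : ∃ d, k₁ = k₂ + 1 + d := ⟨k₁ - (k₂ + 1), by omega⟩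
  set k₁ := k₂ + 1 + d with hk₁
  have hpk₂ : (1:ℕ) ≤ 2 ^ k₂ := Nat.one_le_two_pow
  have hpd : (1:ℕ) ≤ 2 ^ d := Nat.one_le_two_pow
  have hpk₁ : (1:ℕ) ≤ 2 ^ k₁ := Nat.one_le_two_pow
  have hpd1 : (1:ℕ) ≤ 2 ^ (d + 1) := Nat.one_le_two_pow
  have key : (2 ^ (k₁ + 1 + k₂ + 1 + 1) * (2 ^ k₁ - 1) + 2 ^ (k₁ + 1 + k₂ + 1) - 1) *
      (2 ^ (k₁ + 1 + 1) * (2 ^ k₂ - 1) + 2 ^ (k₁ + 1) - 1) =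
      (1 + 2 ^ (k₁ + 1) * 1) +
        2 ^ (2 * k₁ + 2 * k₂ + 4) * ((2 ^ (d + 1) - 1) + 2 ^ (d + 2) * (2 ^ k₂ - 1)) := by
    have hA : (1:ℕ) ≤ 2 ^ (k₁ + 1 + k₂ + 1 + 1) * (2 ^ k₁ - 1) + 2 ^ (k₁ + 1 + k₂ + 1) :=
      le_trans Nat.one_le_two_pow (Nat.le_add_left _ _)
    have hB : (1:ℕ) ≤ 2 ^ (k₁ + 1 + 1) * (2 ^ k₂ - 1) + 2 ^ (k₁ + 1) :=
      le_trans Nat.one_le_two_pow (Nat.le_add_left _ _)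
    zify [hpk₁, hpk₂, hpd1, hA, hB]
    simp only [hk₁]
    ring_nf
  rw [key]
  rw [digits_sum_split (2 * k₁ + 2 * k₂ + 4) _ _ (by
    have ha : (1:ℕ) ≤ 2 ^ (k₁ + 1) := Nat.one_le_two_pow
    have hb : (2:ℕ) ^ (k₁ + 2) ≤ 2 ^ (2 * k₁ + 2 * k₂ + 4) :=
      Nat.pow_le_pow_right (by norm_num) (by omega)
    have hc : (2:ℕ) ^ (k₁ + 2) = 2 * 2 ^ (k₁ + 1) := by rw [pow_succ]; ring
    omega)]
  rw [digits_sum_split (k₁ + 1) 1 1 (Nat.one_lt_two_pow_iff.2 (by omega))]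
  rw [digits_sum_split (d + 2) _ _ (by
    have : (2:ℕ) ^ (d + 1) ≤ 2 ^ (d + 2) := Nat.pow_le_pow_right (by norm_num) (by omega)
    omega)]
  rw [digits_sum_ones, digits_sum_ones]
  norm_num
  omega
end

section
/- For every integer k ≥ 16 and also for k ∈ {12, 13}, there are infinitely many odd positive integers n such that s_2(n^2) = s_2(n) = k. -/
/-!
If `c` is odd and `N` is large, the binary expansions of `n = 2^N a + c` and of
`n² = 2^N (2^N a² + 2ac) + c²` are concatenations of those of the summands, so
`s₂(n) = s₂(a) + s₂(c)` and `s₂(n²) = s₂(a²) + s₂(2ac) + s₂(c²)`. Hence a single pair `(a, c)`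
making both sums equal to `k` yields infinitely many `n`. Such pairs are built from the numbers
`(2^(r+1) - 1) 2^(r+q+2) - 1`, whose binary expansion is a block of `r` ones, a zero and a block
of `r + q + 2` ones; their squares have digit sum `r + q + 2`. Four families of pairs cover every
`k ≥ 12` except `13, 14, 15, 17`, and `13, 17` are given by explicit pairs.
-/

namespace DigitSumSquare

section Base

variable {b : ℕ}

theorem digits_sum_base_pow_mul_add (hb : 1 < b) (a : ℕ) {m c : ℕ} (hc : c < b ^ m) :
    (b.digits (b ^ m * a + c)).sum = (b.digits a).sum + (b.digits c).sum := by
  rcases Nat.eq_zero_or_pos a with rfl | ha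
  · simp
  obtain ⟨k, rfl⟩ := Nat.exists_eq_add_of_le ((Nat.digits_length_le_iff hb c).mpr hc)
  rw [add_comm (b ^ _ * a), ← Nat.digits_append_zeroes_append_digits hb ha]
  simp [add_comm]

theorem digits_sum_base_pow_mul (hb : 1 < b) (m a : ℕ) :
    (b.digits (b ^ m * a)).sum = (b.digits a).sum := by
  simpa using digits_sum_base_pow_mul_add hb a (pow_pos (by omega : 0 < b) m)

theorem digits_sum_base_pow_sub_one (hb : 1 < b) (m : ℕ) :
    (b.digits (b ^ m - 1)).sum = m * (b - 1) := by
  induction m with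
  | zero => simp
  | succ m ih =>
    have hsplit : b ^ (m + 1) - 1 = b ^ 1 * (b ^ m - 1) + (b - 1) := by
      zify [hb.le, Nat.one_le_pow m b (by omega), Nat.one_le_pow (m + 1) b (by omega)]
      ring
    rw [hsplit, digits_sum_base_pow_mul_add hb _ (by simpa using Nat.sub_one_lt_of_lt hb), ih,
      Nat.digits_of_lt b (b - 1) (by omega) (by omega), List.sum_singleton]
    ring

theorem pow_sub_one_lt_pow (hb : 0 < b) {i j : ℕ} (h : i ≤ j) : b ^ i - 1 < b ^ j :=
  (Nat.sub_lt (by positivity) one_pos).trans_le (Nat.pow_le_pow_right hb h)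

theorem base_pow_mul_add_lt {i j x y : ℕ} (hx : x < b ^ j) (hy : y < b ^ i) :
    b ^ i * x + y < b ^ (i + j) :=
  calc b ^ i * x + y < b ^ i * (x + 1) := by rw [mul_add_one]; omega
    _ ≤ b ^ i * b ^ j := Nat.mul_le_mul_left _ hx
    _ = b ^ (i + j) := (pow_add b i j).symm

end Base

local notation "s₂ " n:max => List.sum (Nat.digits 2 n)

theorem digits_sum_two_pow_sub_one (m : ℕ) : s₂ (2 ^ m - 1) = m := by
  simpa using digits_sum_base_pow_sub_one one_lt_two m

structure IsSeed (k a c : ℕ) : Prop where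
  pos : 0 < a
  odd : Odd c
  digits_sum : s₂ a + s₂ c = k
  digits_sum_sq : s₂ (a ^ 2) + s₂ (2 * a * c) + s₂ (c ^ 2) = k

theorem IsSeed.mem {k a c N : ℕ} (h : IsSeed k a c) (hN : 0 < N) (hac : 2 * a * c < 2 ^ N)
    (hcc : c ^ 2 < 2 ^ N) :
    0 < 2 ^ N * a + c ∧ Odd (2 ^ N * a + c) ∧ s₂ ((2 ^ N * a + c) ^ 2) = k ∧
      s₂ (2 ^ N * a + c) = k := by
  have hc : c < 2 ^ N := (Nat.le_self_pow two_ne_zero c).trans_lt hcc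
  have hsq : (2 ^ N * a + c) ^ 2 = 2 ^ N * (2 ^ N * a ^ 2 + 2 * a * c) + c ^ 2 := by ring
  refine ⟨by have := h.pos; positivity,
    ((Nat.even_pow.mpr ⟨even_two, hN.ne'⟩).mul_right a).add_odd h.odd, ?_, ?_⟩
  · rw [hsq, digits_sum_base_pow_mul_add one_lt_two _ hcc,
      digits_sum_base_pow_mul_add one_lt_two _ hac, h.digits_sum_sq]
  · rw [digits_sum_base_pow_mul_add one_lt_two _ hc, h.digits_sum]

theorem IsSeed.infinite {k a c : ℕ} (h : IsSeed k a c) :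
    {n : ℕ | 0 < n ∧ Odd n ∧ s₂ (n ^ 2) = k ∧ s₂ n = k}.Infinite := by
  refine Set.infinite_of_forall_exists_gt fun B => ?_
  set N := B + 2 * a * c + c ^ 2 + 1 with hN_def
  have hN : N < 2 ^ N := Nat.lt_two_pow_self
  refine ⟨_, h.mem (N := N) (by omega) (by omega) (by omega), ?_⟩
  calc B < 2 ^ N := by omega
    _ ≤ 2 ^ N * a := Nat.le_mul_of_pos_right _ h.pos
    _ ≤ 2 ^ N * a + c := Nat.le_add_right _ _

def twoBlocks (r q : ℕ) : ℕ := 2 ^ (r + q + 3) * (2 ^ r - 1) + (2 ^ (r + q + 2) - 1)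

theorem odd_twoBlocks (r q : ℕ) : Odd (twoBlocks r q) :=
  ((Nat.even_pow.mpr ⟨even_two, by omega⟩).mul_right _).add_odd
    (Nat.Even.sub_odd Nat.one_le_two_pow (Nat.even_pow.mpr ⟨even_two, by omega⟩) odd_one)

theorem digits_sum_twoBlocks (r q : ℕ) : s₂ (twoBlocks r q) = 2 * r + q + 2 := by
  rw [twoBlocks, digits_sum_base_pow_mul_add one_lt_two _ (pow_sub_one_lt_pow two_pos (by omega)),
    digits_sum_two_pow_sub_one, digits_sum_two_pow_sub_one]
  ring

theorem digits_sum_twoBlocks_sq (r q : ℕ) : s₂ (twoBlocks r q ^ 2) = r + q + 2 := by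
  have h : twoBlocks r q ^ 2 =
      2 ^ (r + q + 3) * (2 ^ (r + 1 + q) * (2 ^ (r + 2) * (2 ^ r - 1)) +
        (2 ^ (r + 1) * (2 ^ q - 1) + 1)) + 1 := by
    simp only [twoBlocks]
    zify [Nat.one_le_two_pow]
    ring
  rw [h, digits_sum_base_pow_mul_add one_lt_two _ (Nat.one_lt_two_pow (by omega)),
    digits_sum_base_pow_mul_add one_lt_two _
      (base_pow_mul_add_lt (pow_sub_one_lt_pow two_pos le_rfl) (Nat.one_lt_two_pow (by omega))),
    digits_sum_base_pow_mul_add one_lt_two _ (Nat.one_lt_two_pow (by omega)),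
    digits_sum_base_pow_mul one_lt_two, digits_sum_two_pow_sub_one, digits_sum_two_pow_sub_one]
  norm_num
  ring

theorem isSeed_six_mul_add_twelve (r : ℕ) :
    IsSeed (6 * r + 12) (twoBlocks (r + 2) r) (twoBlocks (r + 2) r) := by
  refine ⟨(odd_twoBlocks _ _).pos, odd_twoBlocks _ _, ?_, ?_⟩
  · rw [digits_sum_twoBlocks]
    ring
  · have hcross : 2 * twoBlocks (r + 2) r * twoBlocks (r + 2) r = 2 ^ 1 * twoBlocks (r + 2) r ^ 2 :=
      by ring
    rw [hcross, digits_sum_base_pow_mul one_lt_two, digits_sum_twoBlocks_sq]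
    ring

theorem isSeed_three_mul_add_sixteen (m : ℕ) :
    IsSeed (3 * m + 16) (twoBlocks 2 m) (twoBlocks (m + 3) 2) := by
  refine ⟨(odd_twoBlocks _ _).pos, odd_twoBlocks _ _, ?_, ?_⟩
  · rw [digits_sum_twoBlocks, digits_sum_twoBlocks]
    ring
  have hcross : 2 * twoBlocks 2 m * twoBlocks (m + 3) 2 =
      2 ^ (m + 5 + (m + 10)) * (2 ^ (m + 1 + 1) * 3 + (2 ^ (m + 1) - 1)) +
        (2 ^ (m + 5) * 1 + 2) := by
    simp only [twoBlocks]
    zify [Nat.one_le_two_pow]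
    ring
  have h2 : 2 < 2 ^ (m + 5) := by
    simpa using Nat.pow_lt_pow_right one_lt_two (show 1 < m + 5 by omega)
  rw [digits_sum_twoBlocks_sq, digits_sum_twoBlocks_sq, hcross,
    digits_sum_base_pow_mul_add one_lt_two _
      (base_pow_mul_add_lt (Nat.one_lt_two_pow (by omega)) h2),
    digits_sum_base_pow_mul_add one_lt_two _ (pow_sub_one_lt_pow two_pos (by omega)),
    digits_sum_base_pow_mul_add one_lt_two _ h2, digits_sum_two_pow_sub_one]
  norm_num
  ring

theorem isSeed_three_mul_add_twenty (m : ℕ) :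
    IsSeed (3 * m + 20) (twoBlocks 3 m) (twoBlocks (m + 3) 4) := by
  refine ⟨(odd_twoBlocks _ _).pos, odd_twoBlocks _ _, ?_, ?_⟩
  · rw [digits_sum_twoBlocks, digits_sum_twoBlocks]
    ring
  have hcross : 2 * twoBlocks 3 m * twoBlocks (m + 3) 4 =
      2 ^ (m + 6 + (m + 8)) * (2 ^ (5 + m) * 14 + (2 ^ 5 * (2 ^ m - 1) + 1)) +
        (2 ^ (m + 6) * 1 + 2) := by
    simp only [twoBlocks]
    zify [Nat.one_le_two_pow]
    ring
  have h2 : 2 < 2 ^ (m + 6) := by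
    simpa using Nat.pow_lt_pow_right one_lt_two (show 1 < m + 6 by omega)
  rw [digits_sum_twoBlocks_sq, digits_sum_twoBlocks_sq, hcross,
    digits_sum_base_pow_mul_add one_lt_two _
      (base_pow_mul_add_lt (Nat.one_lt_two_pow (by omega)) h2),
    digits_sum_base_pow_mul_add one_lt_two _
      (base_pow_mul_add_lt (pow_sub_one_lt_pow two_pos le_rfl) (by norm_num)),
    digits_sum_base_pow_mul_add one_lt_two _ (by norm_num),
    digits_sum_base_pow_mul_add one_lt_two _ h2, digits_sum_two_pow_sub_one]
  norm_num
  ring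

theorem isSeed_six_mul_add_twentyOne (r : ℕ) :
    IsSeed (6 * r + 21) (twoBlocks (r + 4) r) (twoBlocks (r + 4) (r + 1)) := by
  refine ⟨(odd_twoBlocks _ _).pos, odd_twoBlocks _ _, ?_, ?_⟩
  · rw [digits_sum_twoBlocks, digits_sum_twoBlocks]
    ring
  have hcross : 2 * twoBlocks (r + 4) r * twoBlocks (r + 4) (r + 1) =
      2 ^ (2 * r + 7 + (r + 5)) * (2 ^ (2 + r + (r + 6)) * (2 ^ (r + 4) - 1) +
        (2 ^ 2 * (2 ^ r - 1) + 1)) + (2 ^ (2 * r + 7) * 3 + 2) := by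
    simp only [twoBlocks]
    zify [Nat.one_le_two_pow]
    ring
  have h2 : 2 < 2 ^ (2 * r + 7) := by
    simpa using Nat.pow_lt_pow_right one_lt_two (show 1 < 2 * r + 7 by omega)
  have h3 : 3 < 2 ^ (r + 5) :=
    (by norm_num : 3 < 2 ^ 2).trans_le (Nat.pow_le_pow_right two_pos (by omega))
  rw [digits_sum_twoBlocks_sq, digits_sum_twoBlocks_sq, hcross,
    digits_sum_base_pow_mul_add one_lt_two _ (base_pow_mul_add_lt h3 h2),
    digits_sum_base_pow_mul_add one_lt_two _
      ((base_pow_mul_add_lt (pow_sub_one_lt_pow two_pos le_rfl) (by norm_num)).trans_le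
        (Nat.pow_le_pow_right two_pos (by omega))),
    digits_sum_base_pow_mul_add one_lt_two _ (by norm_num),
    digits_sum_base_pow_mul_add one_lt_two _ h2, digits_sum_two_pow_sub_one,
    digits_sum_two_pow_sub_one]
  norm_num
  ring

theorem isSeed_thirteen : IsSeed 13 23 1471 :=
  ⟨by norm_num, by decide, by norm_num, by norm_num⟩

theorem isSeed_seventeen : IsSeed 17 23 47071 :=
  ⟨by norm_num, by decide, by norm_num, by norm_num⟩

theorem exists_isSeed {k : ℕ} (hk : 16 ≤ k ∨ k = 12 ∨ k = 13) : ∃ a c, IsSeed k a c := by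
  obtain rfl | rfl | h | h | h | h : k = 13 ∨ k = 17 ∨ k % 6 = 0 ∨ (k % 3 = 1 ∧ 16 ≤ k) ∨
      (k % 6 = 3 ∧ 21 ≤ k) ∨ (k % 3 = 2 ∧ 20 ≤ k) := by omega
  · exact ⟨_, _, isSeed_thirteen⟩
  · exact ⟨_, _, isSeed_seventeen⟩
  · obtain ⟨r, rfl⟩ : ∃ r, k = 6 * r + 12 := ⟨(k - 12) / 6, by omega⟩
    exact ⟨_, _, isSeed_six_mul_add_twelve r⟩
  · obtain ⟨m, rfl⟩ : ∃ m, k = 3 * m + 16 := ⟨(k - 16) / 3, by omega⟩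
    exact ⟨_, _, isSeed_three_mul_add_sixteen m⟩
  · obtain ⟨r, rfl⟩ : ∃ r, k = 6 * r + 21 := ⟨(k - 21) / 6, by omega⟩
    exact ⟨_, _, isSeed_six_mul_add_twentyOne r⟩
  · obtain ⟨m, rfl⟩ : ∃ m, k = 3 * m + 20 := ⟨(k - 20) / 3, by omega⟩
    exact ⟨_, _, isSeed_three_mul_add_twenty m⟩

end DigitSumSquare

open DigitSumSquare in
theorem infinitely_many_large_k (k : ℕ) (hk : 16 ≤ k ∨ k = 12 ∨ k = 13) :
    {n : ℕ | 0 < n ∧ Odd n ∧ (Nat.digits 2 (n ^ 2)).sum = k ∧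
      (Nat.digits 2 n).sum = k}.Infinite := by
  obtain ⟨a, c, h⟩ := exists_isSeed hk
  exact h.infinite
end

section
/- For every integer k ≥ 2 there are infinitely many positive integers n such that s_2(n) = s_2(n^2) = 6k. (One such family: n with binary representation 1^{(k)} 0 1^{(2k)} 0^{(R)} 1^{(k)} 0 1^{(2k)} for R ≥ 6k.) -/
/-!
Let `A = 1^{(k)} 0 1^{(2k)}` in binary, so `s₂(A) = 3k`, and a direct computation shows
`A² = 1^{(k)} 0^{(k+2)} 1^{(k-2)} 0^{(k)} 1 0^{(2k)} 1`, so `s₂(A²) = 2k`. For `n = A·2^L + A` with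
`2A² < 2^L`, the summands of `n² = A²·2^{2L} + 2A²·2^L + A²` occupy disjoint ranges of binary digits,
hence `s₂(n) = 2 s₂(A) = 6k` and `s₂(n²) = 3 s₂(A²) = 6k`; letting `L` vary gives infinitely many `n`.
-/

namespace Nat

theorem digits_sum_mul_pow_add {b : ℕ} (hb : 1 < b) (m : ℕ) {n e : ℕ} (hn : n < b ^ e) :
    (b.digits (m * b ^ e + n)).sum = (b.digits m).sum + (b.digits n).sum := by
  rcases Nat.eq_zero_or_pos m with rfl | hm
  · simp
  obtain ⟨z, hz⟩ := Nat.exists_eq_add_of_le ((digits_length_le_iff hb n).mpr hn)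
  rw [hz, add_comm, mul_comm, ← digits_append_zeroes_append_digits hb hm]
  simp [add_comm]

theorem digits_sum_pow_sub_one {b : ℕ} (hb : 1 < b) (m : ℕ) :
    (b.digits (b ^ m - 1)).sum = m * (b - 1) := by
  induction m with
  | zero => simp
  | succ m ih =>
    have hsplit : b ^ (m + 1) - 1 = (b ^ m - 1) * b ^ 1 + (b - 1) := by
      zify [Nat.one_le_pow m b (by omega), Nat.one_le_pow (m + 1) b (by omega), hb.le]
      ring
    rw [hsplit, digits_sum_mul_pow_add hb _ (by rw [pow_one]; omega), ih,
      digits_of_lt b (b - 1) (by omega) (by omega)]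
    simp [add_mul]

theorem digits_sum_mul_pow_add_self {b A L : ℕ} (hb : 1 < b) (h : A < b ^ L) :
    (b.digits (A * b ^ L + A)).sum = 2 * (b.digits A).sum := by
  rw [digits_sum_mul_pow_add hb A h, two_mul]

theorem digits_two_sum_sq_mul_two_pow_add_self {A L : ℕ} (h : 2 * A ^ 2 < 2 ^ L) :
    (digits 2 ((A * 2 ^ L + A) ^ 2)).sum = 3 * (digits 2 (A ^ 2)).sum := by
  have hsq : (A * 2 ^ L + A) ^ 2 = (A ^ 2 * 2 ^ L + (A ^ 2 * 2 ^ 1 + 0)) * 2 ^ L + A ^ 2 := by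
    ring
  rw [hsq, digits_sum_mul_pow_add one_lt_two _ (by omega),
    digits_sum_mul_pow_add one_lt_two _ (by omega),
    digits_sum_mul_pow_add one_lt_two _ (by norm_num)]
  simp only [digits_zero, List.sum_nil]
  ring

end Nat

/-- `1^{(k)} 0 1^{(2k)}` in binary. -/
def digitBlock (k : ℕ) : ℕ := (2 ^ k - 1) * 2 ^ (2 * k + 1) + (2 ^ (2 * k) - 1)

theorem digitBlock_pos {k : ℕ} (hk : 0 < k) : 0 < digitBlock k := by
  have := Nat.one_lt_two_pow (show 2 * k ≠ 0 by omega)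
  unfold digitBlock
  omega

theorem digitBlock_lt (k : ℕ) : digitBlock k < 2 ^ (3 * k + 1) := by
  have h1 := Nat.one_le_two_pow (n := k)
  have h2 := Nat.one_le_two_pow (n := 2 * k)
  rw [digitBlock, show 2 ^ (3 * k + 1) = 2 ^ k * (2 * 2 ^ (2 * k)) by ring,
    show 2 ^ (2 * k + 1) = 2 * 2 ^ (2 * k) by ring]
  zify [h1, h2]
  nlinarith

theorem two_mul_digitBlock_sq_lt (k : ℕ) : 2 * digitBlock k ^ 2 < 2 ^ (6 * k + 3) := by
  have := Nat.pow_lt_pow_left (digitBlock_lt k) two_ne_zero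
  rw [← pow_mul] at this
  rw [show 6 * k + 3 = (3 * k + 1) * 2 + 1 by ring, pow_succ 2 ((3 * k + 1) * 2)]
  omega

theorem digitBlock_sq {k : ℕ} (hk : 2 ≤ k) :
    digitBlock k ^ 2 = ((2 ^ k - 1) * 2 ^ (2 * k) + (2 ^ (k - 2) - 1)) * 2 ^ (3 * k + 2)
      + (1 * 2 ^ (2 * k + 1) + 1) := by
  obtain ⟨a, rfl⟩ := Nat.exists_eq_add_of_le' hk
  simp only [digitBlock, Nat.add_sub_cancel]
  zify [Nat.one_le_two_pow (n := a), Nat.one_le_two_pow (n := a + 2),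
    Nat.one_le_two_pow (n := 2 * (a + 2))]
  ring

theorem digits_two_sum_digitBlock (k : ℕ) : (Nat.digits 2 (digitBlock k)).sum = 3 * k := by
  have hlow : 2 ^ (2 * k) - 1 < 2 ^ (2 * k + 1) := by
    rw [pow_succ]; have := Nat.one_le_two_pow (n := 2 * k); omega
  rw [digitBlock, Nat.digits_sum_mul_pow_add one_lt_two _ hlow,
    Nat.digits_sum_pow_sub_one one_lt_two, Nat.digits_sum_pow_sub_one one_lt_two]
  omega

theorem digits_two_sum_digitBlock_sq {k : ℕ} (hk : 2 ≤ k) :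
    (Nat.digits 2 (digitBlock k ^ 2)).sum = 2 * k := by
  have hlow : 1 * 2 ^ (2 * k + 1) + 1 < 2 ^ (3 * k + 2) :=
    calc 1 * 2 ^ (2 * k + 1) + 1 < 2 ^ (2 * k + 1) * 2 := by
          have := Nat.one_lt_two_pow (show 2 * k + 1 ≠ 0 by omega); omega
      _ = 2 ^ (2 * k + 2) := (pow_succ 2 (2 * k + 1)).symm
      _ ≤ 2 ^ (3 * k + 2) := Nat.pow_le_pow_right two_pos (by omega)
  have hmid : 2 ^ (k - 2) - 1 < 2 ^ (2 * k) := by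
    have := Nat.pow_le_pow_right two_pos (show k - 2 ≤ 2 * k by omega)
    have := Nat.one_le_two_pow (n := k - 2); omega
  rw [digitBlock_sq hk, Nat.digits_sum_mul_pow_add one_lt_two _ hlow,
    Nat.digits_sum_mul_pow_add one_lt_two _ hmid,
    Nat.digits_sum_mul_pow_add one_lt_two _ (Nat.one_lt_two_pow (by omega)),
    Nat.digits_sum_pow_sub_one one_lt_two, Nat.digits_sum_pow_sub_one one_lt_two]
  norm_num
  omega

theorem infinitely_many_6k (k : ℕ) (hk : 2 ≤ k) :
    {n : ℕ | 0 < n ∧ (Nat.digits 2 n).sum = 6 * k ∧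
      (Nat.digits 2 (n ^ 2)).sum = 6 * k}.Infinite := by
  have hA : 0 < digitBlock k := digitBlock_pos (by omega)
  have hlt (R : ℕ) : digitBlock k < 2 ^ (R + (6 * k + 3)) :=
    (digitBlock_lt k).trans_le (Nat.pow_le_pow_right two_pos (by omega))
  have hbound (R : ℕ) : 2 * digitBlock k ^ 2 < 2 ^ (R + (6 * k + 3)) :=
    (two_mul_digitBlock_sq_lt k).trans_le (Nat.pow_le_pow_right two_pos (by omega))
  refine Set.infinite_of_injective_forall_mem
    (f := fun R ↦ digitBlock k * 2 ^ (R + (6 * k + 3)) + digitBlock k) ?_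
    fun R ↦ ⟨by positivity, ?_, ?_⟩
  · refine (strictMono_nat_of_lt_succ fun R ↦ ?_).injective
    gcongr <;> omega
  · rw [Nat.digits_sum_mul_pow_add_self one_lt_two (hlt R), digits_two_sum_digitBlock]
    ring
  · rw [Nat.digits_two_sum_sq_mul_two_pow_add_self (hbound R), digits_two_sum_digitBlock_sq hk]
    ring
end
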